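/- arXiv:2403.02960 — 4 statements merged into one kernel-verified Lean document; each statement's English description precedes it below -/
import Mathlib

section
/- Let A be a finite set of acts and let S be a subset with ∅ ≠ S ⊊ A. If mML(S,A) < 0 then D_M(A) ⊆ S. -/
open Finset

/-- Upper expectation of `f` with respect to the set `P` of probability mass functions:
`Ē(f) = sup_{p ∈ P} ∑ ω, p ω * f ω` (the sup is attained when `P` is nonempty and compact). -/
noncomputable def upperExp {Ω : Type*} [Fintype Ω] (P : Set (Ω → ℝ)) (f : Ω → ℝ) : ℝ :=
  sSup ((fun p => ∑ ω, p ω * f ω) '' P)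

/-- `P` is a credal set: a nonempty compact set of probability mass functions on `Ω`. -/
def IsCredal {Ω : Type*} [Fintype Ω] (P : Set (Ω → ℝ)) : Prop :=
  P.Nonempty ∧ IsCompact P ∧ ∀ p ∈ P, (∀ ω, 0 ≤ p ω) ∧ ∑ ω, p ω = 1

/-- `a ≻ a'`: act `a` dominates act `a'`, i.e. `Ē(a' − a) < 0` (equivalently `E̲(a − a') > 0`). -/
def dominates {Ω : Type*} [Fintype Ω] (P : Set (Ω → ℝ)) (a a' : Ω → ℝ) : Prop :=
  upperExp P (a' - a) < 0

/-- `a` is a maximal act of `A`: `a ∈ A` and no `a' ∈ A` dominates `a`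
(membership in `D_M(A)`). -/
def maximalIn {Ω : Type*} [Fintype Ω] (P : Set (Ω → ℝ)) (A : Finset (Ω → ℝ))
    (a : Ω → ℝ) : Prop :=
  a ∈ A ∧ ∀ a' ∈ A, ¬ dominates P a' a

/-- `mML(S, A) = min_{a ∈ S} max_{a' ∈ A ∖ S} Ē(a' − a)`, valued in `EReal` so that the
maximum over the empty set is `−∞` (hence `mML(A, A) = −∞` when `S` is nonempty). -/
noncomputable def mML {Ω : Type*} [Fintype Ω] [DecidableEq (Ω → ℝ)]
    (P : Set (Ω → ℝ)) (S A : Finset (Ω → ℝ)) : EReal :=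
  S.inf fun a => (A \ S).sup fun a' => ((upperExp P (a' - a) : ℝ) : EReal)

/-- `MmL(S, A) = max_{a' ∈ A ∖ S} min_{a ∈ S} Ē(a' − a)`, valued in `EReal` so that the
maximum over the empty set is `−∞` (hence `MmL(A, A) = −∞`). -/
noncomputable def MmL {Ω : Type*} [Fintype Ω] [DecidableEq (Ω → ℝ)]
    (P : Set (Ω → ℝ)) (S A : Finset (Ω → ℝ)) : EReal :=
  (A \ S).sup fun a' => S.inf fun a => ((upperExp P (a' - a) : ℝ) : EReal)

theorem exists_dominates_sdiff_of_mML_neg {Ω : Type*} [Fintype Ω] [DecidableEq (Ω → ℝ)]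
    {P : Set (Ω → ℝ)} {S A : Finset (Ω → ℝ)} (hneg : mML P S A < 0) :
    ∃ a ∈ S, ∀ a' ∈ A \ S, dominates P a a' := by
  obtain ⟨a, haS, ha⟩ := Finset.inf_lt_iff.mp hneg
  refine ⟨a, haS, fun a' ha' => ?_⟩
  have hlt : ((upperExp P (a' - a) : ℝ) : EReal) < 0 :=
    (Finset.sup_lt_iff EReal.bot_lt_zero).mp ha a' ha'
  exact EReal.coe_lt_coe_iff.mp hlt

theorem stmt2_general {Ω : Type*} [Fintype Ω] [DecidableEq (Ω → ℝ)]
    (P : Set (Ω → ℝ))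
    (A S : Finset (Ω → ℝ)) (hSA : S ⊂ A)
    (hneg : mML P S A < 0) :
    ∀ a : Ω → ℝ, maximalIn P A a → a ∈ S := by
  intro a ⟨haA, hmax⟩
  by_contra haS
  obtain ⟨a₀, ha₀S, hdom⟩ := exists_dominates_sdiff_of_mML_neg hneg
  exact hmax a₀ (hSA.subset ha₀S) (hdom a (Finset.mem_sdiff.mpr ⟨haA, haS⟩))

theorem stmt2 {Ω : Type*} [Fintype Ω] [Nonempty Ω] [DecidableEq (Ω → ℝ)]
    (P : Set (Ω → ℝ)) (hP : IsCredal P)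
    (A S : Finset (Ω → ℝ)) (hS : S.Nonempty) (hSA : S ⊂ A)
    (hneg : mML P S A < 0) :
    ∀ a : Ω → ℝ, maximalIn P A a → a ∈ S :=
  stmt2_general P A S hSA hneg
end

section
/- Let A be a finite nonempty set of acts and let k ≥ 1. If S is an mML-optimal subset of A of budget k, i.e. ∅ ≠ S ⊆ A with |S| ≤ k and mML(S,A) ≤ mML(T,A) for every nonempty T ⊆ A with |T| ≤ k, then S ∩ D_M(A) ≠ ∅. -/
/-!
Dominance is a strict order on acts, since `Ē` is subadditive and `Ē(0) = 0`. Suppose no act of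
`S` is maximal. Let `a ∈ S` attain the minimum in `mML(S, A)` and let `m` be a maximal act of `A`
dominating `a`; then `m ∉ S`. Swapping `a` for `m` keeps the budget, and
`Ē(a' − m) ≤ Ē(a' − a) + Ē(a − m) < Ē(a' − a)` shows that `mML` strictly decreases,
contradicting the optimality of `S`.
-/

open Finset

theorem Finset.exists_maximal_above {α : Type*} (r : α → α → Prop) [IsStrictOrder α r]
    {A : Finset α} {a : α} (ha : a ∈ A) :
    ∃ m ∈ A, (m = a ∨ r m a) ∧ ∀ b ∈ A, ¬ r b m := by
  obtain ⟨⟨m, hmA⟩, hma, hmin⟩ := (A.finite_toSet.wellFoundedOn (r := r)).has_min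
    {x | x.1 = a ∨ r x.1 a} ⟨⟨a, ha⟩, Or.inl rfl⟩
  refine ⟨m, hmA, hma, fun b hbA hbm => hmin ⟨b, hbA⟩ ?_ hbm⟩
  rcases hma with rfl | hma
  · exact Or.inr hbm
  · exact Or.inr (_root_.trans hbm hma)

section UpperExpectation

variable {Ω : Type*} [Fintype Ω] {P : Set (Ω → ℝ)}

lemma IsCredal.bddAbove_expectations (hP : IsCredal P) (f : Ω → ℝ) :
    BddAbove ((fun p => ∑ ω, p ω * f ω) '' P) := by
  have hcont : Continuous fun p : Ω → ℝ => ∑ ω, p ω * f ω := by fun_prop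
  exact (hP.2.1.image hcont).bddAbove

lemma le_upperExp (hP : IsCredal P) {p : Ω → ℝ} (hp : p ∈ P) (f : Ω → ℝ) :
    ∑ ω, p ω * f ω ≤ upperExp P f :=
  le_csSup (hP.bddAbove_expectations f) ⟨p, hp, rfl⟩

lemma upperExp_le (hP : IsCredal P) {f : Ω → ℝ} {c : ℝ}
    (h : ∀ p ∈ P, ∑ ω, p ω * f ω ≤ c) : upperExp P f ≤ c :=
  csSup_le (hP.1.image _) (Set.forall_mem_image.2 h)

lemma upperExp_zero (hP : IsCredal P) : upperExp P (0 : Ω → ℝ) = 0 := by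
  obtain ⟨p, hp⟩ := hP.1
  refine le_antisymm (upperExp_le hP fun _ _ => by simp) ?_
  simpa using le_upperExp hP hp 0

lemma upperExp_add_le (hP : IsCredal P) (f g : Ω → ℝ) :
    upperExp P (f + g) ≤ upperExp P f + upperExp P g := by
  refine upperExp_le hP fun p hp => ?_
  simp only [Pi.add_apply, mul_add, Finset.sum_add_distrib]
  exact add_le_add (le_upperExp hP hp f) (le_upperExp hP hp g)

lemma upperExp_sub_le (hP : IsCredal P) (a b c : Ω → ℝ) :
    upperExp P (c - a) ≤ upperExp P (c - b) + upperExp P (b - a) := by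
  simpa using upperExp_add_le hP (c - b) (b - a)

lemma upperExp_sub_lt_of_dominates (hP : IsCredal P) {m a : Ω → ℝ} (h : dominates P m a)
    (c : Ω → ℝ) : upperExp P (c - m) < upperExp P (c - a) := by
  have := upperExp_sub_le hP m a c
  unfold dominates at h
  linarith

lemma upperExp_pos_of_dominates (hP : IsCredal P) {m a : Ω → ℝ} (h : dominates P m a) :
    0 < upperExp P (m - a) := by
  simpa [upperExp_zero hP] using upperExp_sub_lt_of_dominates hP h m

lemma isStrictOrder_dominates (hP : IsCredal P) : IsStrictOrder (Ω → ℝ) (dominates P) where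
  irrefl a := by simp [dominates, upperExp_zero hP]
  trans _ _ _ hab hbc := (upperExp_sub_lt_of_dominates hP hab _).trans hbc

end UpperExpectation

lemma mML_insert_erase_lt {Ω : Type*} [Fintype Ω] [DecidableEq (Ω → ℝ)] {P : Set (Ω → ℝ)}
    (hP : IsCredal P) {S A : Finset (Ω → ℝ)} {a m : Ω → ℝ} (ha : a ∈ S) (hm : m ∈ A \ S)
    (hma : dominates P m a) :
    mML P (insert m (S.erase a)) A <
      (A \ S).sup fun a' => ((upperExp P (a' - a) : ℝ) : EReal) := by
  set regret := (A \ S).sup fun a' => ((upperExp P (a' - a) : ℝ) : EReal)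
  have hpos : (0 : EReal) < regret :=
    (EReal.coe_pos.2 (upperExp_pos_of_dominates hP hma)).trans_le
      (le_sup (f := fun a' => ((upperExp P (a' - a) : ℝ) : EReal)) hm)
  refine (inf_le (mem_insert_self m _)).trans_lt
    ((Finset.sup_lt_iff (EReal.bot_lt_zero.trans hpos)).2 fun a' ha' => ?_)
  obtain ⟨ha'A, ha'T⟩ := mem_sdiff.1 ha'
  by_cases ha'a : a' = a
  · subst ha'a
    exact (EReal.coe_lt_coe_iff.2 hma).trans hpos
  · have ha'S : a' ∉ S := fun h => ha'T (mem_insert_of_mem (mem_erase.2 ⟨ha'a, h⟩))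
    exact (EReal.coe_lt_coe_iff.2 (upperExp_sub_lt_of_dominates hP hma a')).trans_le
      (le_sup (f := fun b => ((upperExp P (b - a) : ℝ) : EReal)) (mem_sdiff.2 ⟨ha'A, ha'S⟩))

theorem stmt3_general {Ω : Type*} [Fintype Ω] [DecidableEq (Ω → ℝ)]
    (P : Set (Ω → ℝ)) (hP : IsCredal P)
    (A : Finset (Ω → ℝ)) (k : ℕ)
    (S : Finset (Ω → ℝ)) (hS : S.Nonempty) (hSA : S ⊆ A) (hScard : S.card ≤ k)
    (hopt : ∀ T : Finset (Ω → ℝ), T ⊆ A → T.Nonempty → T.card ≤ k → mML P S A ≤ mML P T A) :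
    ∃ a ∈ S, maximalIn P A a := by
  by_contra! hnone
  have := isStrictOrder_dominates hP
  obtain ⟨a, haS, hmin⟩ := exists_mem_eq_inf S hS
    fun a => (A \ S).sup fun a' => ((upperExp P (a' - a) : ℝ) : EReal)
  obtain ⟨m, hmA, hm_above, hmmax⟩ := exists_maximal_above (dominates P) (hSA haS)
  have hmS : m ∉ S := fun h => hnone m h ⟨hmA, hmmax⟩
  have hma : dominates P m a := hm_above.resolve_left fun h => hmS (h ▸ haS)
  have hTA : insert m (S.erase a) ⊆ A :=
    insert_subset hmA ((erase_subset a S).trans hSA)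
  have hTcard : (insert m (S.erase a)).card ≤ k := by
    have := card_insert_le m (S.erase a)
    have := card_erase_add_one haS
    omega
  have hle := hopt _ hTA (insert_nonempty m _) hTcard
  have hlt := mML_insert_erase_lt hP haS (mem_sdiff.2 ⟨hmA, hmS⟩) hma
  exact (hle.trans_lt hlt).ne hmin

theorem stmt3 {Ω : Type*} [Fintype Ω] [Nonempty Ω] [DecidableEq (Ω → ℝ)]
    (P : Set (Ω → ℝ)) (hP : IsCredal P)
    (A : Finset (Ω → ℝ)) (hA : A.Nonempty) (k : ℕ) (hk : 1 ≤ k)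
    (S : Finset (Ω → ℝ)) (hS : S.Nonempty) (hSA : S ⊆ A) (hScard : S.card ≤ k)
    (hopt : ∀ T : Finset (Ω → ℝ), T ⊆ A → T.Nonempty → T.card ≤ k → mML P S A ≤ mML P T A) :
    ∃ a ∈ S, maximalIn P A a :=
  stmt3_general P hP A k S hS hSA hScard hopt
end

section
/- Let A be a finite set of acts and let S be a subset with ∅ ≠ S ⊊ A. If MmL(S,A) < 0 then D_M(A) ⊆ S. -/
open Finset

theorem exists_dominates_of_MmL_lt_zero {Ω : Type*} [Fintype Ω] [DecidableEq (Ω → ℝ)]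
    {P : Set (Ω → ℝ)} {S A : Finset (Ω → ℝ)} (hneg : MmL P S A < 0) {a' : Ω → ℝ}
    (ha' : a' ∈ A \ S) : ∃ a ∈ S, dominates P a a' := by
  have hinf : (S.inf fun a => ((upperExp P (a' - a) : ℝ) : EReal)) < 0 :=
    (Finset.sup_lt_iff EReal.bot_lt_zero).mp hneg a' ha'
  obtain ⟨a, haS, ha⟩ := Finset.inf_lt_iff.mp hinf
  exact ⟨a, haS, EReal.coe_lt_coe_iff.mp ha⟩

theorem stmt7_general {Ω : Type*} [Fintype Ω] [DecidableEq (Ω → ℝ)]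
    (P : Set (Ω → ℝ))
    (A S : Finset (Ω → ℝ)) (hSA : S ⊂ A)
    (hneg : MmL P S A < 0) :
    ∀ a : Ω → ℝ, maximalIn P A a → a ∈ S := by
  intro a ha
  by_contra haS
  obtain ⟨b, hbS, hb⟩ := exists_dominates_of_MmL_lt_zero hneg (mem_sdiff.mpr ⟨ha.1, haS⟩)
  exact ha.2 b (hSA.subset hbS) hb

theorem stmt7 {Ω : Type*} [Fintype Ω] [Nonempty Ω] [DecidableEq (Ω → ℝ)]
    (P : Set (Ω → ℝ)) (hP : IsCredal P)
    (A S : Finset (Ω → ℝ)) (hS : S.Nonempty) (hSA : S ⊂ A)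
    (hneg : MmL P S A < 0) :
    ∀ a : Ω → ℝ, maximalIn P A a → a ∈ S :=
  stmt7_general P A S hSA hneg
end

section
/- Let A be a finite set of acts with |A| > k ≥ 1. For each a ∈ A, let M_k(a) denote the k-th largest value of the multiset {Ē(a' − a) : a' ∈ A ∖ {a}}. Then the minimum of mML(S,A) over all nonempty subsets S ⊆ A with |S| ≤ k equals min_{a∈A} M_k(a). -/
open Finset

/-- The `k`-th largest element of a multiset of reals (for `1 ≤ k ≤ card`):
position `card − k` in the ascending sort. -/
noncomputable def kthLargest (m : Multiset ℝ) (k : ℕ) : ℝ :=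
  (m.sort (· ≤ ·)).getD (Multiset.card m - k) 0

/-!
For a fixed act `a`, the sets `S ∋ a` with `|S| ≤ k` are `insert a T` for the sets `T` of fewer
than `k` competitors, and the `k`-th largest of the values `Ē(a' − a)` is the least possible
maximum of these values over the competitors outside such a `T` (discard the `k − 1` largest).
Taking the minimum over `a` on both sides gives the identity.
-/

namespace List

variable {α : Type*} [LinearOrder α] {l : List α}

theorem Pairwise.exists_split_getElem (hl : l.Pairwise (· ≤ ·)) {i : ℕ}
    (hi : i < l.length) :
    ∃ s t, l = s ++ l[i] :: t ∧ s.length = i ∧ (∀ x ∈ s, x ≤ l[i]) ∧ ∀ x ∈ t, l[i] ≤ x := by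
  have hsplit : l = l.take i ++ l[i] :: l.drop (i + 1) := by simp
  refine ⟨l.take i, l.drop (i + 1), hsplit, by simp; omega, ?_⟩
  rw [hsplit, pairwise_append, pairwise_cons] at hl
  exact ⟨fun x hx => hl.2.2 x hx _ mem_cons_self, hl.2.1.1⟩

theorem Pairwise.length_sub_le_countP_getElem_le (hl : l.Pairwise (· ≤ ·)) {i : ℕ}
    (hi : i < l.length) : l.length - i ≤ l.countP (l[i] ≤ ·) := by
  obtain ⟨s, t, hst, rfl, -, ht⟩ := hl.exists_split_getElem hi
  generalize l[s.length] = v at *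
  subst hst
  rw [countP_append, countP_cons_of_pos (by simp),
    (countP_eq_length (l := t)).2 (by simpa using ht)]
  simp

theorem Pairwise.countP_getElem_lt_le (hl : l.Pairwise (· ≤ ·)) {i : ℕ}
    (hi : i < l.length) : l.countP (l[i] < ·) ≤ l.length - (i + 1) := by
  obtain ⟨s, t, hst, rfl, hs, -⟩ := hl.exists_split_getElem hi
  generalize l[s.length] = v at *
  subst hst
  rw [countP_append, countP_cons_of_neg (by simp), countP_eq_zero.2 (by simpa using hs)]
  have := t.countP_le_length (p := (v < ·))
  simp only [length_append, length_cons]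
  omega

end List

theorem Multiset.card_filter_eq_countP_sort (m : Multiset ℝ) (p : ℝ → Prop)
    [DecidablePred p] : card (m.filter p) = (m.sort (· ≤ ·)).countP p := by
  conv_lhs => rw [← Multiset.sort_eq m (· ≤ ·)]
  rw [Multiset.filter_coe, Multiset.coe_card, List.countP_eq_length_filter]

theorem le_card_filter_kthLargest_le (m : Multiset ℝ) {k : ℕ} (hk : 1 ≤ k)
    (hkm : k ≤ Multiset.card m) : k ≤ Multiset.card (m.filter (kthLargest m k ≤ ·)) := by
  have hi : Multiset.card m - k < (m.sort (· ≤ ·)).length := by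
    rw [Multiset.length_sort]; omega
  have := (m.pairwise_sort (· ≤ ·)).length_sub_le_countP_getElem_le hi
  rw [Multiset.length_sort] at this
  rw [kthLargest, List.getD_eq_getElem _ _ hi, m.card_filter_eq_countP_sort]
  omega

theorem card_filter_kthLargest_lt_lt (m : Multiset ℝ) {k : ℕ} (hk : 1 ≤ k)
    (hkm : k ≤ Multiset.card m) : Multiset.card (m.filter (kthLargest m k < ·)) < k := by
  have hi : Multiset.card m - k < (m.sort (· ≤ ·)).length := by
    rw [Multiset.length_sort]; omega
  have := (m.pairwise_sort (· ≤ ·)).countP_getElem_lt_le hi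
  rw [Multiset.length_sort] at this
  rw [kthLargest, List.getD_eq_getElem _ _ hi, m.card_filter_eq_countP_sort]
  omega

theorem Finset.card_filter_comp_eq_card_filter_map {α : Type*} (B : Finset α) (f : α → ℝ)
    (p : ℝ → Prop) [DecidablePred p] :
    (B.filter (p ∘ f)).card = Multiset.card ((B.val.map f).filter p) := by
  rw [Multiset.filter_map, Multiset.card_map]
  rfl

section KthLargest

variable {α : Type*} [DecidableEq α] {A B S : Finset α} {a : α} {k : ℕ}

theorem exists_mem_sdiff_kthLargest_le (f : α → ℝ) (hk : 1 ≤ k) (hkB : k ≤ B.card)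
    {T : Finset α} (hT : T.card < k) : ∃ b ∈ B \ T, kthLargest (B.val.map f) k ≤ f b := by
  set U := B.filter ((kthLargest (B.val.map f) k ≤ ·) ∘ f)
  have hU : k ≤ U.card := by
    rw [B.card_filter_comp_eq_card_filter_map]
    exact le_card_filter_kthLargest_le _ hk (by simpa using hkB)
  obtain ⟨b, hb⟩ : (U \ T).Nonempty := by
    rw [← Finset.card_pos]
    have := Finset.le_card_sdiff T U
    omega
  simp only [U, Finset.mem_sdiff, Finset.mem_filter, Function.comp_apply] at hb
  exact ⟨b, Finset.mem_sdiff.2 ⟨hb.1.1, hb.2⟩, hb.1.2⟩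

theorem exists_card_lt_forall_mem_sdiff_le_kthLargest (f : α → ℝ) (hk : 1 ≤ k)
    (hkB : k ≤ B.card) :
    ∃ T ⊆ B, T.card < k ∧ ∀ b ∈ B \ T, f b ≤ kthLargest (B.val.map f) k := by
  refine ⟨B.filter ((kthLargest (B.val.map f) k < ·) ∘ f), Finset.filter_subset _ _, ?_, ?_⟩
  · rw [B.card_filter_comp_eq_card_filter_map]
    exact card_filter_kthLargest_lt_lt _ hk (by simpa using hkB)
  · intro b hb
    simp only [Finset.mem_sdiff, Finset.mem_filter, Function.comp_apply, not_and, not_lt] at hb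
    exact hb.2 hb.1

theorem kthLargest_le_sup_sdiff (f : α → ℝ) (hk : 1 ≤ k) (hkA : k < A.card) (hSA : S ⊆ A)
    (hSk : S.card ≤ k) (haS : a ∈ S) :
    (kthLargest ((A.erase a).val.map f) k : EReal) ≤ (A \ S).sup fun b => (f b : EReal) := by
  have hkA' : k ≤ (A.erase a).card := by rw [Finset.card_erase_of_mem (hSA haS)]; omega
  have hS' : (S.erase a).card < k := by rw [Finset.card_erase_of_mem haS]; omega
  obtain ⟨b, hb, hfb⟩ := exists_mem_sdiff_kthLargest_le f hk hkA' hS'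
  rw [← Finset.erase_sdiff_distrib, Finset.erase_eq_of_notMem (by simp [haS])] at hb
  exact (EReal.coe_le_coe_iff.2 hfb).trans (Finset.le_sup (f := fun b => (f b : EReal)) hb)

theorem exists_sup_sdiff_le_kthLargest (f : α → ℝ) (hk : 1 ≤ k) (hkA : k < A.card)
    (ha : a ∈ A) : ∃ S ⊆ A, a ∈ S ∧ S.card ≤ k ∧
      ((A \ S).sup fun b => (f b : EReal)) ≤ kthLargest ((A.erase a).val.map f) k := by
  have hkA' : k ≤ (A.erase a).card := by rw [Finset.card_erase_of_mem ha]; omega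
  obtain ⟨T, hTA, hTk, hT⟩ := exists_card_lt_forall_mem_sdiff_le_kthLargest f hk hkA'
  refine ⟨insert a T, Finset.insert_subset ha (hTA.trans (A.erase_subset a)),
    Finset.mem_insert_self a T, (Finset.card_insert_le a T).trans hTk, Finset.sup_le ?_⟩
  intro b hb
  rw [Finset.sdiff_insert, ← Finset.erase_sdiff_comm] at hb
  exact EReal.coe_le_coe_iff.2 (hT b hb)

theorem inf_inf_sup_sdiff_eq_inf_kthLargest (g : α → α → ℝ) (hk : 1 ≤ k) (hkA : k < A.card) :
    ((A.powerset.filter fun S => S.Nonempty ∧ S.card ≤ k).inf fun S =>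
        S.inf fun a => (A \ S).sup fun a' => (g a' a : EReal)) =
      A.inf fun a => (kthLargest ((A.erase a).val.map fun a' => g a' a) k : EReal) := by
  apply le_antisymm
  · refine Finset.le_inf fun a ha => ?_
    obtain ⟨S, hSA, haS, hSk, hsup⟩ := exists_sup_sdiff_le_kthLargest (g · a) hk hkA ha
    have hS : S ∈ A.powerset.filter fun S => S.Nonempty ∧ S.card ≤ k := by
      simpa [hSA, hSk] using ⟨a, haS⟩
    exact (Finset.inf_le hS).trans ((Finset.inf_le haS).trans hsup)
  · refine Finset.le_inf fun S hS => Finset.le_inf fun a haS => ?_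
    simp only [Finset.mem_filter, Finset.mem_powerset] at hS
    exact (Finset.inf_le (hS.1 haS)).trans
      (kthLargest_le_sup_sdiff (g · a) hk hkA hS.1 hS.2.2 haS)

end KthLargest

theorem stmt18_general {Ω : Type*} [Fintype Ω] [DecidableEq (Ω → ℝ)]
    (P : Set (Ω → ℝ))
    (A : Finset (Ω → ℝ)) (k : ℕ) (hk : 1 ≤ k) (hkA : k < A.card) :
    ((A.powerset.filter fun S => S.Nonempty ∧ S.card ≤ k).inf fun S => mML P S A) =
      A.inf fun a =>
        ((kthLargest (((A.erase a).val.map fun a' => upperExp P (a' - a))) k : ℝ) : EReal) :=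
  inf_inf_sup_sdiff_eq_inf_kthLargest (fun a' a => upperExp P (a' - a)) hk hkA

theorem stmt18 {Ω : Type*} [Fintype Ω] [Nonempty Ω] [DecidableEq (Ω → ℝ)]
    (P : Set (Ω → ℝ)) (hP : IsCredal P)
    (A : Finset (Ω → ℝ)) (k : ℕ) (hk : 1 ≤ k) (hkA : k < A.card) :
    ((A.powerset.filter fun S => S.Nonempty ∧ S.card ≤ k).inf fun S => mML P S A) =
      A.inf fun a =>
        ((kthLargest (((A.erase a).val.map fun a' => upperExp P (a' - a))) k : ℝ) : EReal) :=
  stmt18_general P A k hk hkA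
end
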